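/- Let 3/2 < q < ∞. There exists a constant C = C(q) > 0 such that for every measurable f : ℝ³ → ℝ with f ≥ 0 almost everywhere, f ∈ L¹(ℝ³) ∩ L^q(ℝ³), the integrals defining ā^f_{ij}(v) converge absolutely for every v ∈ ℝ³, and for every v ∈ ℝ³ and every ξ ∈ ℝ³ one has Σ_{i,j=1}^{3} ā^f_{ij}(v) ξ_i ξ_j ≤ C (‖f‖_{L^q(ℝ³)} + ‖f‖_{L¹(ℝ³)}) |ξ|². -/

import Mathlib

/-!
The quadratic form of `a(z)` is `(|ξ|² - (z·ξ)²/|z|²)/|z| ≤ |ξ|²/|z|`, so for `f ≥ 0` the quadratic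
form of `ā^f(v)` is at most `|ξ|²` times the Riesz potential `∫ f(z)/|v - z| dz`. Splitting
`1/|w| ≤ 1_{|w|<1}/|w| + 1`, the near part lies in `L^p` for every `p < 3`, in particular for the
conjugate exponent `p = q/(q - 1)` of `q > 3/2`, and Hölder's inequality bounds the potential by
`‖1_{|w|<1}/|w|‖_p ‖f‖_q + ‖f‖_1`.
-/

open MeasureTheory

/-- The Coulomb kernel matrix `a_{ij}(z) = (1/|z|)(δ_{ij} − z_i z_j/|z|²)`. -/
noncomputable def aK (i j : Fin 3) (z : EuclideanSpace ℝ (Fin 3)) : ℝ :=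
  (1 / ‖z‖) * ((if i = j then (1 : ℝ) else 0) - z i * z j / ‖z‖ ^ 2)

open Metric Set
open scoped ENNReal

local notation "ℝ³" => EuclideanSpace ℝ (Fin 3)

section Integral

variable {α : Type*} [MeasurableSpace α] {μ : Measure α}

lemma integral_le_toReal_eLpNorm_one {g : α → ℝ} (hg : AEStronglyMeasurable g μ) :
    ∫ x, g x ∂μ ≤ (eLpNorm g 1 μ).toReal := by
  rw [eLpNorm_one_eq_lintegral_enorm, ← integral_norm_eq_lintegral_enorm hg]
  exact (le_abs_self _).trans abs_integral_le_integral_abs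

lemma integral_mul_le_toReal_eLpNorm_mul {p q : ℝ≥0∞} [p.HolderTriple q 1] {g f : α → ℝ}
    (hg : MemLp g p μ) (hf : MemLp f q μ) :
    ∫ x, g x * f x ∂μ ≤ (eLpNorm g p μ).toReal * (eLpNorm f q μ).toReal := by
  have hHolder : eLpNorm (fun x => g x * f x) 1 μ ≤ eLpNorm g p μ * eLpNorm f q μ :=
    eLpNorm_smul_le_mul_eLpNorm (f := f) (φ := g) (p := p) (q := q) (r := 1) hf.1 hg.1
  calc ∫ x, g x * f x ∂μ ≤ (eLpNorm (fun x => g x * f x) 1 μ).toReal :=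
        integral_le_toReal_eLpNorm_one (hg.1.mul hf.1)
    _ ≤ (eLpNorm g p μ * eLpNorm f q μ).toReal :=
        ENNReal.toReal_mono (ENNReal.mul_ne_top hg.eLpNorm_ne_top hf.eLpNorm_ne_top) hHolder
    _ = _ := ENNReal.toReal_mul

lemma sum_sum_integral_mul_mul {ι : Type*} [Fintype ι] {g : ι → ι → α → ℝ}
    (hg : ∀ i j, Integrable (g i j) μ) (c : ι → ℝ) :
    ∑ i, ∑ j, (∫ x, g i j x ∂μ) * c i * c j = ∫ x, ∑ i, ∑ j, g i j x * c i * c j ∂μ := by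
  rw [integral_finsetSum _ fun i _ => integrable_finsetSum _ fun j _ =>
    ((hg i j).mul_const _).mul_const _]
  refine Finset.sum_congr rfl fun i _ => ?_
  rw [integral_finsetSum _ fun j _ => ((hg i j).mul_const _).mul_const _]
  simp only [integral_mul_const]

end Integral

section InvNormNear

variable {E : Type*} [NormedAddCommGroup E]

variable (E) in
noncomputable def invNormNear : E → ℝ := (ball (0 : E) 1).indicator fun z => ‖z‖⁻¹

lemma inv_norm_le_invNormNear_add_one (z : E) : ‖z‖⁻¹ ≤ invNormNear E z + 1 := by
  by_cases hz : z ∈ ball (0 : E) 1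
  · simp [invNormNear, indicator_of_mem hz]
  · have : 1 ≤ ‖z‖ := by simpa using hz
    simp [invNormNear, indicator_of_notMem hz, inv_le_one_of_one_le₀ this]

lemma norm_invNormNear_rpow {p : ℝ} (hp : 0 < p) :
    (fun z => ‖invNormNear E z‖ ^ p) = (ball (0 : E) 1).indicator fun z => ‖z‖ ^ (-p) := by
  ext z
  by_cases hz : z ∈ ball (0 : E) 1
  · simp [invNormNear, indicator_of_mem hz, Real.inv_rpow, Real.rpow_neg]
  · simp [invNormNear, indicator_of_notMem hz, Real.zero_rpow hp.ne']

variable [MeasurableSpace E] [BorelSpace E]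

lemma measurable_invNormNear : Measurable (invNormNear E) :=
  measurable_norm.inv.indicator measurableSet_ball

variable [NormedSpace ℝ E] [FiniteDimensional ℝ E] {μ : Measure E} [μ.IsAddHaarMeasure]

lemma memLp_invNormNear {p : ℝ} (hp₀ : 0 < p) (hp : p < Module.finrank ℝ E) :
    MemLp (invNormNear E) (ENNReal.ofReal p) μ := by
  have hp' : ENNReal.ofReal p ≠ 0 := by simpa using hp₀
  refine (integrable_norm_rpow_iff measurable_invNormNear.aestronglyMeasurable hp'
    ENNReal.ofReal_ne_top).1 ?_
  have hd : 1 ≤ Module.finrank ℝ E := by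
    have : (0 : ℝ) < Module.finrank ℝ E := hp₀.trans hp
    exact_mod_cast this
  rw [ENNReal.toReal_ofReal hp₀.le, norm_invNormNear_rpow hp₀, integrable_indicator_iff
    measurableSet_ball]
  refine integrableOn_ball_of_norm_le_rpow (C := 1) hd hp (.of_forall fun z => ?_)
    (measurable_norm.pow_const _).aestronglyMeasurable
  rw [one_mul, Real.norm_of_nonneg (by positivity)]

variable {p q : ℝ≥0∞} [p.HolderTriple q 1] {f : E → ℝ}

lemma integrable_inv_norm_sub_mul (hψ : MemLp (invNormNear E) p μ) (hf : Integrable f μ)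
    (hfq : MemLp f q μ) (v : E) : Integrable (fun z => ‖v - z‖⁻¹ * f z) μ := by
  have hψv : MemLp (fun z => invNormNear E (v - z)) p μ :=
    hψ.comp_measurePreserving (Measure.measurePreserving_sub_left μ v)
  refine ((hψv.integrable_mul hfq).norm.add hf.norm).mono'
    (((measurable_const.sub measurable_id).norm.inv.aestronglyMeasurable).mul hf.1)
    (.of_forall fun z => ?_)
  have hψ₀ : 0 ≤ invNormNear E (v - z) := indicator_nonneg (fun _ _ => by positivity) _
  simp only [Pi.add_apply, Pi.mul_apply, norm_mul, norm_inv, norm_norm]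
  rw [Real.norm_of_nonneg hψ₀, ← add_one_mul]
  exact mul_le_mul_of_nonneg_right (inv_norm_le_invNormNear_add_one (v - z)) (norm_nonneg _)

lemma integral_inv_norm_sub_mul_le (hψ : MemLp (invNormNear E) p μ) (hf : Integrable f μ)
    (hfq : MemLp f q μ) (hf₀ : 0 ≤ᵐ[μ] f) (v : E) :
    ∫ z, ‖v - z‖⁻¹ * f z ∂μ ≤
      (eLpNorm (invNormNear E) p μ).toReal * (eLpNorm f q μ).toReal + (eLpNorm f 1 μ).toReal := by
  have hsub := Measure.measurePreserving_sub_left μ v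
  have hψv : MemLp (fun z => invNormNear E (v - z)) p μ := hψ.comp_measurePreserving hsub
  have hψv_norm : eLpNorm (fun z => invNormNear E (v - z)) p μ = eLpNorm (invNormNear E) p μ :=
    eLpNorm_comp_measurePreserving hψ.1 hsub
  calc ∫ z, ‖v - z‖⁻¹ * f z ∂μ ≤ ∫ z, (invNormNear E (v - z) * f z + f z) ∂μ := by
        refine integral_mono_ae (integrable_inv_norm_sub_mul hψ hf hfq v)
          ((hψv.integrable_mul hfq).add hf) ?_
        filter_upwards [hf₀] with z hz
        rw [← add_one_mul]
        exact mul_le_mul_of_nonneg_right (inv_norm_le_invNormNear_add_one (v - z)) hz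
    _ = ∫ z, invNormNear E (v - z) * f z ∂μ + ∫ z, f z ∂μ :=
        integral_add (hψv.integrable_mul hfq) hf
    _ ≤ _ := by
        gcongr
        · simpa only [hψv_norm] using integral_mul_le_toReal_eLpNorm_mul hψv hfq
        · exact integral_le_toReal_eLpNorm_one hf.1

end InvNormNear

section Kernel

lemma abs_aK_le (i j : Fin 3) (z : ℝ³) : |aK i j z| ≤ 2 * ‖z‖⁻¹ := by
  rcases eq_or_ne z 0 with rfl | hz
  · simp [aK]
  have hz₀ : 0 < ‖z‖ := norm_pos_iff.2 hz
  have hzij : |z i * z j / ‖z‖ ^ 2| ≤ 1 := by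
    rw [abs_div, abs_mul, abs_of_pos (a := ‖z‖ ^ 2) (by positivity), div_le_one (by positivity),
      sq]
    exact mul_le_mul (PiLp.norm_apply_le z i) (PiLp.norm_apply_le z j) (abs_nonneg _)
      (norm_nonneg _)
  have hδ : |(if i = j then (1 : ℝ) else 0)| ≤ 1 := by split_ifs <;> simp
  rw [aK, abs_mul, one_div, abs_of_pos (inv_pos.2 hz₀), mul_comm]
  gcongr
  linarith [abs_sub (if i = j then (1 : ℝ) else 0) (z i * z j / ‖z‖ ^ 2)]

lemma measurable_aK (i j : Fin 3) : Measurable (aK i j) := by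
  unfold aK
  fun_prop

lemma sum_aK_mul_le (z ξ : ℝ³) : ∑ i, ∑ j, aK i j z * ξ i * ξ j ≤ ‖z‖⁻¹ * ‖ξ‖ ^ 2 := by
  have hform : ∑ i, ∑ j, aK i j z * ξ i * ξ j
      = ‖z‖⁻¹ * (‖ξ‖ ^ 2 - (∑ i, z i * ξ i) ^ 2 / ‖z‖ ^ 2) := by
    simp only [aK, EuclideanSpace.norm_sq_eq ξ, Fin.sum_univ_three, Real.norm_eq_abs, sq_abs,
      Fin.isValue, Fin.reduceEq, ↓reduceIte]
    ring
  have hproj : 0 ≤ (∑ i, z i * ξ i) ^ 2 / ‖z‖ ^ 2 := by positivity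
  rw [hform]
  gcongr
  linarith

lemma integrable_aK_sub_mul {μ : Measure ℝ³} {f : ℝ³ → ℝ} {v : ℝ³}
    (hpot : Integrable (fun z => ‖v - z‖⁻¹ * f z) μ) (hf : AEStronglyMeasurable f μ) (i j : Fin 3) :
    Integrable (fun z => aK i j (v - z) * f z) μ := by
  refine (hpot.norm.const_mul 2).mono'
    (((measurable_aK i j).comp (measurable_const.sub measurable_id)).aestronglyMeasurable.mul hf)
    (.of_forall fun z => ?_)
  rw [norm_mul, norm_mul, norm_inv, norm_norm, ← mul_assoc]
  exact mul_le_mul_of_nonneg_right (abs_aK_le i j (v - z)) (norm_nonneg _)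

lemma sum_integral_aK_sub_mul_le {μ : Measure ℝ³} {f : ℝ³ → ℝ} {v : ℝ³}
    (hpot : Integrable (fun z => ‖v - z‖⁻¹ * f z) μ) (hf : AEStronglyMeasurable f μ)
    (hf₀ : 0 ≤ᵐ[μ] f) (ξ : ℝ³) :
    ∑ i, ∑ j, (∫ z, aK i j (v - z) * f z ∂μ) * ξ i * ξ j ≤ ‖ξ‖ ^ 2 * ∫ z, ‖v - z‖⁻¹ * f z ∂μ := by
  have haK := integrable_aK_sub_mul hpot hf
  rw [sum_sum_integral_mul_mul haK, ← integral_const_mul]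
  refine integral_mono_ae (integrable_finsetSum _ fun i _ => integrable_finsetSum _
    fun j _ => ((haK i j).mul_const _).mul_const _) (hpot.const_mul _) ?_
  filter_upwards [hf₀] with z hz
  have hquad := mul_le_mul_of_nonneg_right (sum_aK_mul_le (v - z) ξ) hz
  simp only [Finset.sum_mul] at hquad
  convert hquad using 1
  · simp only [mul_right_comm _ (f z)]
  · ring

end Kernel

theorem upper_ellipticity (q : ℝ) (hq : 3 / 2 < q) :
    ∃ C > (0 : ℝ), ∀ f : EuclideanSpace ℝ (Fin 3) → ℝ,
      Measurable f → (∀ᵐ z : EuclideanSpace ℝ (Fin 3) ∂volume, 0 ≤ f z) →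
      Integrable f → MemLp f (ENNReal.ofReal q) volume →
      (∀ (v : EuclideanSpace ℝ (Fin 3)) (i j : Fin 3),
        Integrable (fun z => aK i j (v - z) * f z)) ∧
      ∀ v ξ : EuclideanSpace ℝ (Fin 3),
        (∑ i, ∑ j, (∫ z, aK i j (v - z) * f z) * ξ i * ξ j)
          ≤ C * ((eLpNorm f (ENNReal.ofReal q) volume).toReal
              + (eLpNorm f 1 volume).toReal) * ‖ξ‖ ^ 2 := by
  obtain ⟨p, hqp, hp₀, hp⟩ : ∃ p : ℝ, q.HolderConjugate p ∧ 0 < p ∧ p < 3 := by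
    have hq' : 0 < q - 1 := by linarith
    refine ⟨q.conjExponent, .conjExponent (by linarith), div_pos (by linarith) hq', ?_⟩
    rw [Real.conjExponent, div_lt_iff₀ hq']
    linarith
  have : (ENNReal.ofReal p).HolderTriple (ENNReal.ofReal q) 1 := hqp.symm.ennrealOfReal
  have hψ : MemLp (invNormNear ℝ³) (ENNReal.ofReal p) volume :=
    memLp_invNormNear hp₀ (by simpa [finrank_euclideanSpace] using hp)
  set K := (eLpNorm (invNormNear ℝ³) (ENNReal.ofReal p) volume).toReal
  refine ⟨K + 1, by positivity, fun f _ hf₀ hf hfq => ?_⟩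
  have hpot v := integrable_inv_norm_sub_mul hψ hf hfq v
  refine ⟨fun v => integrable_aK_sub_mul (hpot v) hf.1, fun v ξ => ?_⟩
  set nq := (eLpNorm f (ENNReal.ofReal q) volume).toReal
  set n₁ := (eLpNorm f 1 volume).toReal
  have hK : 0 ≤ K := ENNReal.toReal_nonneg
  have hnq : 0 ≤ nq := ENNReal.toReal_nonneg
  have hn₁ : 0 ≤ n₁ := ENNReal.toReal_nonneg
  calc ∑ i, ∑ j, (∫ z, aK i j (v - z) * f z) * ξ i * ξ j
      ≤ ‖ξ‖ ^ 2 * ∫ z, ‖v - z‖⁻¹ * f z := sum_integral_aK_sub_mul_le (hpot v) hf.1 hf₀ ξ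
    _ ≤ ‖ξ‖ ^ 2 * (K * nq + n₁) := by
        gcongr
        exact integral_inv_norm_sub_mul_le hψ hf hfq hf₀ v
    _ ≤ ‖ξ‖ ^ 2 * ((K + 1) * (nq + n₁)) := by
        gcongr
        nlinarith
    _ = (K + 1) * (nq + n₁) * ‖ξ‖ ^ 2 := mul_comm _ _
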